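/- arXiv:1104.2217 — 2 statements merged into one kernel-verified Lean document; each statement's English description precedes it below -/
import Mathlib

section
/- The matching produced by the men-proposing Gale-Shapley algorithm is woman-pessimal: for every woman w and every stable matching μ, w does not strictly prefer her Gale-Shapley partner to μ(w). -/
namespace GS

/-- The `k` most-preferred elements of `S` according to the rank function `rank`
(lower rank = more preferred); if `S` has at most `k` elements this is all of `S`. -/
def topk {α : Type*} [DecidableEq α] (rank : α → ℕ) (k : ℕ) (S : Finset α) : Finset α :=
  S.filter fun a => (S.filter fun b => rank b < rank a).card < k

/-- An instance of the stable-matching problem with `n` women and `n` men.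
`mpref m w` is the rank man `m` assigns to woman `w` (lower = more preferred),
and `wpref w m` is the rank woman `w` assigns to man `m`. -/
structure Instance (n : ℕ) where
  mpref : Fin n → Fin n → ℕ
  wpref : Fin n → Fin n → ℕ
  mprefInj : ∀ m, Function.Injective (mpref m)
  wprefInj : ∀ w, Function.Injective (wpref w)

variable {n : ℕ}

/-- `prefers p a b` : `a` is strictly preferred to `b` under rank function `p`. -/
def prefers (p : Fin n → ℕ) (a b : Fin n) : Prop := p a < p b

/-- Given the current state `avail m` (the women who have not yet rejected man `m`),
the set of women man `m` proposes to tonight: his most-preferred available woman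
(a singleton, or empty if no woman is available). -/
def proposals (I : Instance n) (avail : Fin n → Finset (Fin n)) (m : Fin n) :
    Finset (Fin n) := topk (I.mpref m) 1 (avail m)

/-- The men proposing to woman `w` tonight. -/
def proposersOf (I : Instance n) (avail : Fin n → Finset (Fin n)) (w : Fin n) :
    Finset (Fin n) := Finset.univ.filter fun m => w ∈ proposals I avail m

/-- The men rejected by woman `w` tonight: all of tonight's proposers except
her most-preferred one. -/
def rejectedBy (I : Instance n) (avail : Fin n → Finset (Fin n)) (w : Fin n) :
    Finset (Fin n) := proposersOf I avail w \ topk (I.wpref w) 1 (proposersOf I avail w)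

/-- One night of the men-proposing Gale-Shapley algorithm. -/
def step (I : Instance n) (avail : Fin n → Finset (Fin n)) :
    Fin n → Finset (Fin n) :=
  fun m => (avail m).filter fun w => m ∉ rejectedBy I avail w

/-- `nights I t m` : the set of women who have not rejected man `m` before night `t`
(initially all women). -/
def nights (I : Instance n) (t : ℕ) : Fin n → Finset (Fin n) :=
  (step I)^[t] (fun _ => Finset.univ)

/-- The algorithm has terminated by night `T`: no man is rejected on night `T`. -/
def Stopped (I : Instance n) (T : ℕ) : Prop := step I (nights I T) = nights I T

/-- On night `T`, each man `m` serenades exactly under the window of `μ m`. -/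
def MatchesAt (I : Instance n) (T : ℕ) (μ : Fin n ≃ Fin n) : Prop :=
  ∀ m, proposals I (nights I T) m = {μ m}

/-- The bijection `μ` (from men to women) is the outcome of the men-proposing
Gale-Shapley algorithm on instance `I`: for some night `T` no rejection occurs and
every man `m` is matched with `μ m`. -/
def IsGSMatching (I : Instance n) (μ : Fin n ≃ Fin n) : Prop :=
  ∃ T, Stopped I T ∧ MatchesAt I T μ

/-- Stability of a matching `μ` (men to women): there is no unmatched pair `(w, m)`
each of whom strictly prefers the other to their partner under `μ`. -/
def Stable (I : Instance n) (μ : Fin n ≃ Fin n) : Prop :=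
  ¬ ∃ m w, μ m ≠ w ∧ I.mpref m w < I.mpref m (μ m) ∧ I.wpref w m < I.wpref w (μ.symm w)

/-- The instance in which the women in `L` replace their true preferences by the
false preference rankings `f`, everyone else being truthful. -/
def liarInstance (I : Instance n) (L : Finset (Fin n))
    (f : Fin n → Fin n → ℕ) (hf : ∀ w, Function.Injective (f w)) : Instance n where
  mpref := I.mpref
  wpref := fun w => if w ∈ L then f w else I.wpref w
  mprefInj := I.mprefInj
  wprefInj := fun w => by split_ifs; exacts [hf w, I.wprefInj w]

end GS

/-!
A woman rejects a man only in favour of another proposer she ranks higher, and a man proposes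
to his favourite among the women who have not yet rejected him. So if a man were ever rejected
by his partner in a stable matching `ν`, the proposer she preferred to him would form a blocking
pair with her. Hence no man is ever rejected by his `ν`-partner, and each man likes his
Gale-Shapley partner `w` at least as much as his `ν`-partner; if `w` also preferred him to her
own `ν`-partner, the two would block `ν`.
-/

namespace GS

variable {n : ℕ}

theorem mem_topk_one_iff {α : Type*} [DecidableEq α] {rank : α → ℕ} {S : Finset α} {a : α} :
    a ∈ topk rank 1 S ↔ a ∈ S ∧ ∀ b ∈ S, ¬ rank b < rank a := by
  simp [topk, Finset.card_eq_zero, Finset.filter_eq_empty_iff]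

theorem nights_succ (I : Instance n) (t : ℕ) : nights I (t + 1) = step I (nights I t) :=
  Function.iterate_succ_apply' _ _ _

theorem mpref_lt_of_mem_proposals {I : Instance n} {avail : Fin n → Finset (Fin n)}
    {m w w' : Fin n} (hw : w ∈ proposals I avail m) (hw' : w' ∈ avail m) (hne : w' ≠ w) :
    I.mpref m w < I.mpref m w' :=
  lt_of_le_of_ne (not_lt.mp ((mem_topk_one_iff.mp hw).2 w' hw'))
    fun h => hne (I.mprefInj m h).symm

theorem notMem_rejectedBy_of_stable {I : Instance n} {ν : Fin n ≃ Fin n} (hν : Stable I ν)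
    {avail : Fin n → Finset (Fin n)} (havail : ∀ m, ν m ∈ avail m) (m : Fin n) :
    m ∉ rejectedBy I avail (ν m) := by
  intro hrej
  obtain ⟨hm_proposes, hnot_best⟩ := Finset.mem_sdiff.mp hrej
  simp only [mem_topk_one_iff, not_and, not_forall, not_not] at hnot_best
  obtain ⟨m', hm'_proposes, hm'_preferred⟩ := hnot_best hm_proposes
  have hm'_ne : m' ≠ m := by rintro rfl; exact lt_irrefl _ hm'_preferred
  have hν_ne : ν m' ≠ ν m := ν.injective.ne hm'_ne
  have hm'_likes : I.mpref m' (ν m) < I.mpref m' (ν m') :=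
    mpref_lt_of_mem_proposals (Finset.mem_filter.mp hm'_proposes).2 (havail m') hν_ne
  exact hν ⟨m', ν m, hν_ne, hm'_likes, by rwa [Equiv.symm_apply_apply]⟩

theorem Stable.mem_nights {I : Instance n} {ν : Fin n ≃ Fin n} (hν : Stable I ν) (t : ℕ)
    (m : Fin n) : ν m ∈ nights I t m := by
  induction t generalizing m with
  | zero => exact Finset.mem_univ _
  | succ t ih =>
    rw [nights_succ]
    exact Finset.mem_filter.mpr ⟨ih m, notMem_rejectedBy_of_stable hν ih m⟩

end GS

open GS in
/-- Woman-pessimality: no woman strictly prefers her Gale-Shapley partner to her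
partner in any stable matching `ν`. -/
theorem gale_shapley_woman_pessimal (n : ℕ) (I : GS.Instance n)
    (μ : Fin n ≃ Fin n) (hμ : IsGSMatching I μ)
    (ν : Fin n ≃ Fin n) (hν : Stable I ν) (w : Fin n) :
    ¬ prefers (I.wpref w) (μ.symm w) (ν.symm w) := by
  intro hw_prefers
  obtain ⟨T, -, hmatch⟩ := hμ
  set m := μ.symm w
  have hproposes : w ∈ proposals I (nights I T) m := by
    rw [hmatch m, μ.apply_symm_apply]; exact Finset.mem_singleton_self w
  have hν_ne : ν m ≠ w := by
    rintro hνm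
    rw [prefers, ← hνm, ν.symm_apply_apply] at hw_prefers
    exact lt_irrefl _ hw_prefers
  have hm_prefers : I.mpref m w < I.mpref m (ν m) :=
    mpref_lt_of_mem_proposals hproposes (hν.mem_nights T m) hν_ne
  exact hν ⟨m, w, hν_ne, hm_prefers, hw_prefers⟩
end

section
/- Suppose a subset L of women declare false preferences in the men-proposing Gale-Shapley algorithm. If no woman in L is worse-off (according to her true preferences), then no man is better-off: no man truly prefers his new partner to his original partner. -/
/-! In the true run of the algorithm, consider the first night on which some man `m` is
rejected by his `N`-partner `w = N m`. She rejects him for a proposer `m'` who has not yet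
been rejected by his own `N`-partner, so `m'` prefers `w` to `N m'`. If `w` is truthful,
`(m', w)` blocks `N` in the reported instance, contradicting stability of Gale-Shapley
outcomes. If `w` lies, her true Gale-Shapley partner is at least as good as `m'`, hence
strictly better than `m`, so she is worse off. Therefore no man is ever rejected by his
`N`-partner in the true run, whereas a man who prefers `N m` to `O m` must have been. -/

namespace GS

section TopOne

variable {α : Type*} [DecidableEq α] {rank : α → ℕ} {S : Finset α}

lemma mem_topk_one {a : α} : a ∈ topk rank 1 S ↔ a ∈ S ∧ ∀ b ∈ S, ¬ rank b < rank a := by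
  simp only [topk, Finset.mem_filter, Nat.lt_one_iff, Finset.card_eq_zero,
    Finset.filter_eq_empty_iff]

lemma topk_one_nonempty (h : S.Nonempty) : (topk rank 1 S).Nonempty := by
  obtain ⟨a, ha, hmin⟩ := S.exists_min_image rank h
  exact ⟨a, mem_topk_one.mpr ⟨ha, fun b hb => not_lt.mpr (hmin b hb)⟩⟩

end TopOne

variable {n : ℕ} (I : Instance n)

lemma mem_proposals {A : Fin n → Finset (Fin n)} {m w : Fin n} :
    w ∈ proposals I A m ↔ w ∈ A m ∧ ∀ b ∈ A m, ¬ I.mpref m b < I.mpref m w :=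
  mem_topk_one

lemma mem_proposersOf {A : Fin n → Finset (Fin n)} {w m : Fin n} :
    m ∈ proposersOf I A w ↔ w ∈ proposals I A m := by
  simp [proposersOf]

lemma exists_wpref_lt_of_mem_rejectedBy {A : Fin n → Finset (Fin n)} {w m : Fin n}
    (h : m ∈ rejectedBy I A w) :
    ∃ m' ∈ proposersOf I A w, I.wpref w m' < I.wpref w m := by
  obtain ⟨hm, hnot⟩ := Finset.mem_sdiff.mp h
  by_contra! hc
  exact hnot (mem_topk_one.mpr ⟨hm, fun b hb => not_lt.mpr (hc b hb)⟩)

lemma mem_nights_succ {t : ℕ} {m w : Fin n} :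
    w ∈ nights I (t + 1) m ↔ w ∈ nights I t m ∧ m ∉ rejectedBy I (nights I t) w := by
  rw [nights, Function.iterate_succ_apply']
  simp [step, nights]

lemma nights_antitone : Antitone (nights I) :=
  antitone_nat_of_succ_le fun _ _ _ hw => ((mem_nights_succ I).mp hw).1

lemma nights_eq_of_stopped {T s : ℕ} (h : Stopped I T) (hs : T ≤ s) :
    nights I s = nights I T := by
  obtain ⟨k, rfl⟩ := Nat.exists_eq_add_of_le hs
  rw [nights, add_comm, Function.iterate_add_apply]
  exact Function.IsFixedPt.iterate h k

lemma exists_rejection_of_not_mem_nights {m w : Fin n} {T : ℕ} (h : w ∉ nights I T m) :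
    ∃ t, w ∈ nights I t m ∧ m ∈ rejectedBy I (nights I t) w := by
  induction T with
  | zero => exact absurd (Finset.mem_univ w) h
  | succ T ih =>
    by_cases hw : w ∈ nights I T m
    · exact ⟨T, hw, by_contra fun hc => h ((mem_nights_succ I).mpr ⟨hw, hc⟩)⟩
    · exact ih hw

lemma mem_proposersOf_succ_of_mem_topk {t : ℕ} {w m : Fin n}
    (h : m ∈ topk (I.wpref w) 1 (proposersOf I (nights I t) w)) :
    m ∈ proposersOf I (nights I (t + 1)) w := by
  have hm : m ∈ proposersOf I (nights I t) w := (mem_topk_one.mp h).1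
  have hprop := (mem_proposals I).mp ((mem_proposersOf I).mp hm)
  have hkept : w ∈ nights I (t + 1) m :=
    (mem_nights_succ I).mpr ⟨hprop.1, fun hr => (Finset.mem_sdiff.mp hr).2 h⟩
  exact (mem_proposersOf I).mpr ((mem_proposals I).mpr
    ⟨hkept, fun b hb => hprop.2 b (nights_antitone I t.le_succ m hb)⟩)

lemma exists_proposersOf_wpref_le {t s : ℕ} {w m : Fin n} (hts : t ≤ s)
    (h : m ∈ proposersOf I (nights I t) w) :
    ∃ m' ∈ proposersOf I (nights I s) w, I.wpref w m' ≤ I.wpref w m := by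
  induction s, hts using Nat.le_induction with
  | base => exact ⟨m, h, le_rfl⟩
  | succ s _ ih =>
    obtain ⟨m'', hm'', hle⟩ := ih
    obtain ⟨mb, hmb⟩ := topk_one_nonempty (rank := I.wpref w) ⟨m'', hm''⟩
    exact ⟨mb, mem_proposersOf_succ_of_mem_topk I hmb,
      (not_lt.mp ((mem_topk_one.mp hmb).2 m'' hm'')).trans hle⟩

lemma proposersOf_eq_singleton {T : ℕ} {μ : Fin n ≃ Fin n} (hT : MatchesAt I T μ)
    (w : Fin n) : proposersOf I (nights I T) w = {μ.symm w} := by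
  ext m
  rw [mem_proposersOf, hT m, Finset.mem_singleton, Finset.mem_singleton,
    Equiv.eq_symm_apply, eq_comm]

variable {I} {μ : Fin n ≃ Fin n}

lemma IsGSMatching.wpref_symm_le_of_mem_proposersOf (hμ : IsGSMatching I μ) {t : ℕ}
    {w m : Fin n} (h : m ∈ proposersOf I (nights I t) w) :
    I.wpref w (μ.symm w) ≤ I.wpref w m := by
  obtain ⟨T, hstop, hT⟩ := hμ
  obtain ⟨m', hm', hle⟩ := exists_proposersOf_wpref_le I (le_max_left t T) h
  rw [nights_eq_of_stopped I hstop (le_max_right t T), proposersOf_eq_singleton I hT,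
    Finset.mem_singleton] at hm'
  exact hm' ▸ hle

lemma IsGSMatching.exists_rejection_of_mpref_lt (hμ : IsGSMatching I μ) {m w : Fin n}
    (hw : I.mpref m w < I.mpref m (μ m)) : ∃ t, m ∈ rejectedBy I (nights I t) w := by
  obtain ⟨T, -, hT⟩ := hμ
  have hprop : μ m ∈ proposals I (nights I T) m := by
    rw [hT m]; exact Finset.mem_singleton_self _
  obtain ⟨t, -, hrej⟩ := exists_rejection_of_not_mem_nights I (T := T) fun hmem =>
    ((mem_proposals I).mp hprop).2 w hmem hw
  exact ⟨t, hrej⟩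

theorem IsGSMatching.stable (hμ : IsGSMatching I μ) : Stable I μ := by
  rintro ⟨m, w, -, hm, hw⟩
  obtain ⟨t, hrej⟩ := hμ.exists_rejection_of_mpref_lt hm
  obtain ⟨m', hm', hlt⟩ := exists_wpref_lt_of_mem_rejectedBy I hrej
  exact (hμ.wpref_symm_le_of_mem_proposersOf hm').not_gt (hlt.trans hw)

variable (I)

lemma exists_blocking_of_rejected_by_partner (ν : Fin n ≃ Fin n)
    (h : ∃ t m, m ∈ rejectedBy I (nights I t) (ν m)) :
    ∃ t m m', m' ∈ proposersOf I (nights I t) (ν m) ∧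
      I.wpref (ν m) m' < I.wpref (ν m) m ∧ I.mpref m' (ν m) < I.mpref m' (ν m') := by
  classical
  obtain ⟨m, hrej⟩ := Nat.find_spec h
  obtain ⟨m', hm', hlt⟩ := exists_wpref_lt_of_mem_rejectedBy I hrej
  have hkept : ν m' ∈ nights I (Nat.find h) m' := by
    by_contra hc
    obtain ⟨s, hs, hrej'⟩ := exists_rejection_of_not_mem_nights I hc
    have hs_lt : s < Nat.find h := lt_of_not_ge fun hge => hc (nights_antitone I hge m' hs)
    exact Nat.find_min h hs_lt ⟨m', hrej'⟩
  have hmm' : m ≠ m' := by rintro rfl; exact lt_irrefl _ hlt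
  have hle := not_lt.mp (((mem_proposals I).mp ((mem_proposersOf I).mp hm')).2 _ hkept)
  exact ⟨_, m, m', hm', hlt,
    hle.lt_of_ne fun heq => hmm' (ν.injective (I.mprefInj m' heq))⟩

lemma liarInstance_wpref_of_not_mem {L : Finset (Fin n)} {f : Fin n → Fin n → ℕ}
    {hf : ∀ w, Function.Injective (f w)} {w : Fin n} (hw : w ∉ L) :
    (liarInstance I L f hf).wpref w = I.wpref w := by
  simp [liarInstance, hw]

end GS

open GS in
/-- If the lying women `L` are all not worse-off (under their true preferences),
then no man is better-off: no man truly prefers his new partner to his original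
partner. -/
theorem no_liar_worse_off_implies_no_man_better_off (n : ℕ) (I : GS.Instance n)
    (L : Finset (Fin n)) (f : Fin n → Fin n → ℕ) (hf : ∀ w, Function.Injective (f w))
    (O N : Fin n ≃ Fin n)
    (hO : IsGSMatching I O) (hN : IsGSMatching (liarInstance I L f hf) N)
    (hliars : ∀ w ∈ L, ¬ prefers (I.wpref w) (O.symm w) (N.symm w)) :
    ∀ m, ¬ prefers (I.mpref m) (N m) (O m) := by
  intro m₀ hm₀
  obtain ⟨t₀, hrej₀⟩ := hO.exists_rejection_of_mpref_lt hm₀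
  obtain ⟨t, m, m', hm', hw, hm⟩ :=
    exists_blocking_of_rejected_by_partner I N ⟨t₀, m₀, hrej₀⟩
  have hN_symm : N.symm (N m) = m := N.symm_apply_apply m
  by_cases hL : N m ∈ L
  · refine hliars _ hL ?_
    rw [prefers, hN_symm]
    exact (hO.wpref_symm_le_of_mem_proposersOf hm').trans_lt hw
  · refine hN.stable ⟨m', N m, fun heq => hm.ne' (congrArg _ heq), hm, ?_⟩
    rwa [liarInstance_wpref_of_not_mem I hL, hN_symm]
end
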